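/- Let P be a Markov kernel on E that is ergodic with invariant probability measure π (for every x ∈ E and every measurable A, δ_x P^n(A) → π(A) as n → ∞) and non-atomic ((P(x,·) ⊗ P(y,·))(D) = 0 for all (x,y) ∈ E×E). Let Q be a Markov coupling of P with absorbing diagonal that has independent components with some parameter β ∈ (0,1) (Q((x,y),·) ≥ β·(P(x,·) ⊗ P(y,·)) for all (x,y) ∉ D). For a probability measure λ on E×E let ℙ_λ be the law of the chain with kernel Q and initial distribution λ, and let τ_c be the hitting time of D. If there exist x₀ ∈ E and r₀ > 0 such that E_{δ_{x₀} ⊗ π}[e^{r₀ τ_c}] < ∞, then E_{δ_x ⊗ π}[e^{r₀ τ_c}] < ∞ for π-almost every x ∈ E. (Lemma 2.4 of the paper.) -/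

import Mathlib

open MeasureTheory ProbabilityTheory Filter
open scoped ENNReal NNReal Topology

/-- `iterK Q n` is the `n`-step kernel `Q^n` (`n`-fold composition of `Q`). -/
noncomputable def iterK {S : Type*} [MeasurableSpace S] (Q : Kernel S S) : ℕ → Kernel S S
  | 0 => Kernel.id
  | n + 1 => Q ∘ₖ iterK Q n

/-- `surv Q D n z = ℙ_z[τ_c > n]`: the probability that the Markov chain with kernel `Q`
started at `z` avoids the set `D` at all times `0, 1, …, n`, where
`τ_c = inf {n ≥ 0 : ω_n ∈ D}` is the hitting time of `D`. -/
noncomputable def surv {S : Type*} [MeasurableSpace S] (Q : Kernel S S) (D : Set S) :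
    ℕ → S → ℝ≥0∞
  | 0 => Dᶜ.indicator 1
  | n + 1 => Dᶜ.indicator (fun z => ∫⁻ w, surv Q D n w ∂(Q z))

section Aux

variable {S : Type*} [MeasurableSpace S] (Q : Kernel S S) (D : Set S)

lemma surv_zero_def : surv Q D 0 = Dᶜ.indicator 1 := rfl

lemma surv_succ_def (n : ℕ) :
    surv Q D (n + 1) = Dᶜ.indicator (fun z => ∫⁻ w, surv Q D n w ∂(Q z)) := rfl

lemma surv_zero_apply {z : S} (hz : z ∈ Dᶜ) : surv Q D 0 z = 1 := by
  rw [surv_zero_def, Set.indicator_of_mem hz]; rfl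

lemma surv_succ_apply {z : S} (hz : z ∈ Dᶜ) (n : ℕ) :
    surv Q D (n + 1) z = ∫⁻ w, surv Q D n w ∂(Q z) := by
  rw [surv_succ_def, Set.indicator_of_mem hz]

lemma surv_le_one [IsMarkovKernel Q] : ∀ (n : ℕ) (z : S), surv Q D n z ≤ 1 := by
  intro n
  induction n with
  | zero =>
    intro z
    by_cases h : z ∈ Dᶜ
    · rw [surv_zero_apply Q D h]
    · rw [surv_zero_def, Set.indicator_of_notMem h]; exact zero_le_one
  | succ n ih =>
    intro z
    by_cases h : z ∈ Dᶜ
    · rw [surv_succ_apply Q D h]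
      calc ∫⁻ w, surv Q D n w ∂(Q z) ≤ ∫⁻ _, 1 ∂(Q z) := lintegral_mono ih
        _ = 1 := by simp
    · rw [surv_succ_def, Set.indicator_of_notMem h]; exact zero_le_one

lemma surv_succ_le [IsMarkovKernel Q] : ∀ (n : ℕ) (z : S), surv Q D (n + 1) z ≤ surv Q D n z := by
  intro n
  induction n with
  | zero =>
    intro z
    by_cases h : z ∈ Dᶜ
    · rw [surv_succ_apply Q D h, surv_zero_apply Q D h]
      calc ∫⁻ w, surv Q D 0 w ∂(Q z) ≤ ∫⁻ _, 1 ∂(Q z) := lintegral_mono (surv_le_one Q D 0)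
        _ = 1 := by simp
    · rw [surv_succ_def, Set.indicator_of_notMem h]; exact zero_le'
  | succ n ih =>
    intro z
    by_cases h : z ∈ Dᶜ
    · rw [surv_succ_apply Q D h, surv_succ_apply Q D h]
      exact lintegral_mono ih
    · rw [surv_succ_def, Set.indicator_of_notMem h]; exact zero_le'

lemma measurable_surv [IsSFiniteKernel Q] (hDmeas : MeasurableSet D) (n : ℕ) : Measurable (surv Q D n) := by
  induction n with
  | zero => exact measurable_one.indicator hDmeas.compl
  | succ n ih =>
    rw [surv_succ_def]
    exact (Measurable.lintegral_kernel ih).indicator hDmeas.compl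

end Aux

/-- `couplingMGF Q D r z = E_z[e^{r τ_c}]` where `τ_c` is the hitting time of `D` for the
chain with kernel `Q` started at `z` (with the convention `e^∞ = ∞`). -/
noncomputable def couplingMGF {S : Type*} [MeasurableSpace S] (Q : Kernel S S) (D : Set S)
    (r : ℝ) (z : S) : ℝ≥0∞ :=
  (1 - surv Q D 0 z)
    + ∑' n : ℕ, ENNReal.ofReal (Real.exp (r * (n + 1))) * (surv Q D n z - surv Q D (n + 1) z)
    + ⊤ * ⨅ n, surv Q D n z

/-- `E_λ[e^{r τ_c}] = ∫ E_z[e^{r τ_c}] dλ(z)` for an initial distribution `λ` on `E × E`. -/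
noncomputable def couplingMGFFrom {S : Type*} [MeasurableSpace S] (Q : Kernel S S) (D : Set S)
    (r : ℝ) (lam : Measure S) : ℝ≥0∞ :=
  ∫⁻ z, couplingMGF Q D r z ∂lam

section Aux2

variable {S : Type*} [MeasurableSpace S] (Q : Kernel S S) (D : Set S)

lemma measurable_couplingMGF [IsSFiniteKernel Q] (hDmeas : MeasurableSet D) (r : ℝ) :
    Measurable (couplingMGF Q D r) := by
  have hm := measurable_surv Q D hDmeas
  unfold couplingMGF
  exact (((hm 0).const_sub 1).add
      (Measurable.ennreal_tsum fun n => ((hm n).sub (hm (n + 1))).const_mul _)).add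
    ((Measurable.iInf hm).const_mul ⊤)

set_option maxHeartbeats 1000000 in
lemma couplingMGF_step [IsMarkovKernel Q] (hDmeas : MeasurableSet D) (r : ℝ) {z : S}
    (hz : z ∉ D) :
    couplingMGF Q D r z = ENNReal.ofReal (Real.exp r) * ∫⁻ w, couplingMGF Q D r w ∂(Q z) := by
  have hz' : z ∈ Dᶜ := hz
  have hm : ∀ n, Measurable (surv Q D n) := measurable_surv Q D hDmeas
  have hle1 := surv_le_one Q D
  have hsucc := surv_succ_le Q D
  have hfin : ∀ n, ∫⁻ w, surv Q D n w ∂(Q z) ≠ ⊤ := by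
    intro n
    refine ((lintegral_mono (hle1 n)).trans_lt ?_).ne
    simp
  have h0 : surv Q D 0 z = 1 := surv_zero_apply Q D hz'
  have hS : ∀ n, surv Q D (n + 1) z = ∫⁻ w, surv Q D n w ∂(Q z) :=
    fun n => surv_succ_apply Q D hz' n
  set e := ENNReal.ofReal (Real.exp r) with he
  have hene : e ≠ 0 := (ENNReal.ofReal_pos.mpr (Real.exp_pos r)).ne'
  -- integrals of the three pieces
  have hA : ∫⁻ w, (1 - surv Q D 0 w) ∂(Q z) = surv Q D 0 z - surv Q D 1 z := by
    rw [lintegral_sub (hm 0) (hfin 0) (Filter.Eventually.of_forall (hle1 0)),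
      lintegral_one, measure_univ, h0, hS 0]
  have hB : ∀ n, ∫⁻ w, (surv Q D n w - surv Q D (n + 1) w) ∂(Q z)
      = surv Q D (n + 1) z - surv Q D (n + 2) z := by
    intro n
    rw [lintegral_sub (hm (n + 1)) (hfin (n + 1)) (Filter.Eventually.of_forall (hsucc n)),
      hS n, hS (n + 1)]
  have hInf : ∫⁻ w, (⨅ n, surv Q D n w) ∂(Q z) = ⨅ n, surv Q D n z := by
    rw [lintegral_iInf hm (antitone_nat_of_succ_le fun n w => hsucc n w) (hfin 0)]
    have h' : ∀ n, ∫⁻ w, surv Q D n w ∂(Q z) = surv Q D (n + 1) z := fun n => (hS n).symm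
    simp_rw [h']
    exact le_antisymm (le_iInf fun n => iInf_le_of_le n (hsucc n z))
      (le_iInf fun n => iInf_le _ (n + 1))
  have mA : Measurable fun w => 1 - surv Q D 0 w := (hm 0).const_sub 1
  have mB : Measurable fun w => ∑' n : ℕ,
      ENNReal.ofReal (Real.exp (r * (n + 1))) * (surv Q D n w - surv Q D (n + 1) w) :=
    Measurable.ennreal_tsum fun n => ((hm n).sub (hm (n + 1))).const_mul _
  have mC : Measurable fun w => (⊤ : ℝ≥0∞) * ⨅ n, surv Q D n w :=
    (Measurable.iInf hm).const_mul ⊤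
  have hrhs : ∫⁻ w, couplingMGF Q D r w ∂(Q z)
      = (surv Q D 0 z - surv Q D 1 z)
        + (∑' n : ℕ, ENNReal.ofReal (Real.exp (r * (n + 1)))
            * (surv Q D (n + 1) z - surv Q D (n + 2) z))
        + ⊤ * ⨅ n, surv Q D n z := by
    unfold couplingMGF
    rw [lintegral_add_right _ mC, lintegral_add_right _ mB, hA]
    congr 1
    · congr 1
      rw [lintegral_tsum (f := fun (n : ℕ) w => ENNReal.ofReal (Real.exp (r * ((n : ℝ) + 1))) * (surv Q D n w - surv Q D (n + 1) w)) fun n => (((hm n).sub (hm (n + 1))).const_mul _).aemeasurable]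
      refine tsum_congr fun n => ?_
      rw [lintegral_const_mul (f := fun w => surv Q D n w - surv Q D (n + 1) w) _ ((hm n).sub (hm (n + 1))), hB n]
    · rw [lintegral_const_mul _ (Measurable.iInf hm), hInf]
  rw [hrhs]
  have hee : ∀ n : ℕ,
      ENNReal.ofReal (Real.exp (r * ((n : ℝ) + 1 + 1)))
        = e * ENNReal.ofReal (Real.exp (r * ((n : ℝ) + 1))) := by
    intro n
    rw [he, ← ENNReal.ofReal_mul (Real.exp_nonneg _), ← Real.exp_add]
    ring_nf
  unfold couplingMGF
  rw [h0, tsub_self, zero_add, tsum_eq_zero_add' ENNReal.summable]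
  push_cast
  rw [h0, mul_add e, ← mul_assoc e ⊤, ENNReal.mul_top hene]
  congr 1
  rw [mul_add e]
  congr 1
  · norm_num [he]
  · rw [← ENNReal.tsum_mul_left]
    exact tsum_congr fun n => by rw [hee n, mul_assoc]

end Aux2

/-- **Lemma 2.4**: let `P` be ergodic with invariant probability `π` and non-atomic, and let
`Q` be a Markov coupling of `P` with absorbing diagonal and independent components with
parameter `β ∈ (0,1)`.  If `E_{δ_{x₀} ⊗ π}[e^{r₀ τ_c}] < ∞` for some `x₀ ∈ E` and `r₀ > 0`,
then `E_{δ_x ⊗ π}[e^{r₀ τ_c}] < ∞` for `π`-almost every `x ∈ E`. -/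
theorem finite_exp_coupling_time_ae_dirac_prod {E : Type*} [MeasurableSpace E]
    (π : Measure E) [IsProbabilityMeasure π]
    (P : Kernel E E) [IsMarkovKernel P]
    (D : Set (E × E)) (hD : D = {p : E × E | p.1 = p.2}) (hDmeas : MeasurableSet D)
    -- `π` is an invariant probability measure of `P`
    (hinv : π.bind (fun x => P x) = π)
    -- ergodicity: `δ_x P^n (A) → π(A)` for every `x` and every measurable `A`
    (herg : ∀ x : E, ∀ A : Set E, MeasurableSet A →
      Tendsto (fun n => (iterK P n) x A) atTop (𝓝 (π A)))
    -- `P` is non-atomic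
    (hnonatomic : ∀ p : E × E, ((P p.1).prod (P p.2)) D = 0)
    (Q : Kernel (E × E) (E × E)) [IsMarkovKernel Q]
    -- `Q` is a Markov coupling of `P`
    (hmarg : ∀ p : E × E, p ∉ D → ∀ A : Set E, MeasurableSet A →
      Q p (A ×ˢ Set.univ) = P p.1 A ∧ Q p (Set.univ ×ˢ A) = P p.2 A)
    -- the diagonal is absorbing
    (habs : ∀ z ∈ D, Q z D = 1)
    -- independent components with parameter `β ∈ (0,1)`
    (β : ℝ≥0∞) (hβ0 : 0 < β) (hβ1 : β < 1)
    (hindep : ∀ p : E × E, p ∉ D → β • ((P p.1).prod (P p.2)) ≤ Q p)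
    (x₀ : E) (r₀ : ℝ) (hr₀ : 0 < r₀)
    (hfin : couplingMGFFrom Q D r₀ ((Measure.dirac x₀).prod π) < ⊤) :
    ∀ᵐ x ∂π, couplingMGFFrom Q D r₀ ((Measure.dirac x).prod π) < ⊤ := by
  classical
  set e := ENNReal.ofReal (Real.exp r₀) with he
  have hene : e ≠ 0 := (ENNReal.ofReal_pos.mpr (Real.exp_pos r₀)).ne'
  have hc : e * β ≠ 0 := mul_ne_zero hene hβ0.ne'
  -- the product kernel and its measurability
  have hK' : ∀ p : E × E, (P p.1).prod (P p.2) = ((P.prodMkRight E) ×ₖ (P.prodMkLeft E)) p := by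
    intro p
    rw [Kernel.prod_apply, Kernel.prodMkRight_apply, Kernel.prodMkLeft_apply]
  have hKmeas : Measurable (fun p : E × E => (P p.1).prod (P p.2)) := by
    simp only [hK']; exact Kernel.measurable _
  -- bind of a product by the product kernel
  have hbind : ∀ (μ ν : Measure E), IsProbabilityMeasure μ → IsProbabilityMeasure ν →
      (μ.prod ν).bind (fun p : E × E => (P p.1).prod (P p.2))
        = (μ.bind fun x => P x).prod (ν.bind fun x => P x) := by
    intro μ ν hμ hν
    haveI := hμ; haveI := hν
    haveI : IsProbabilityMeasure (μ.bind fun x => P x) :=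
      ⟨by rw [Measure.bind_apply MeasurableSet.univ P.measurable.aemeasurable]; simp⟩
    haveI : IsProbabilityMeasure (ν.bind fun x => P x) :=
      ⟨by rw [Measure.bind_apply MeasurableSet.univ P.measurable.aemeasurable]; simp⟩
    refine (Measure.prod_eq fun s t hs ht => ?_).symm
    rw [Measure.bind_apply (hs.prod ht) hKmeas.aemeasurable]
    have hrect : ∀ p : E × E, ((P p.1).prod (P p.2)) (s ×ˢ t) = (P p.1) s * (P p.2) t :=
      fun p => Measure.prod_prod s t
    simp_rw [hrect]
    rw [lintegral_prod_mul (P.measurable_coe hs).aemeasurable (P.measurable_coe ht).aemeasurable,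
      Measure.bind_apply hs P.measurable.aemeasurable, Measure.bind_apply ht P.measurable.aemeasurable]
  -- π has no atoms
  have hππD : (π.prod π) D = 0 := by
    have h1 : (π.prod π).bind (fun p : E × E => (P p.1).prod (P p.2)) = π.prod π := by
      rw [hbind π π inferInstance inferInstance, hinv]
    rw [← h1, Measure.bind_apply hDmeas hKmeas.aemeasurable]
    simp [hnonatomic]
  have hatom : ∀ a : E, π {a} = 0 := by
    intro a
    have hsub : ({a} ×ˢ {a} : Set (E × E)) ⊆ D := by
      rintro ⟨x, y⟩ ⟨hx, hy⟩
      simp only [Set.mem_singleton_iff] at hx hy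
      simp [hD, hx, hy]
    have hle := measure_mono (μ := π.prod π) hsub
    rw [hππD, Measure.prod_prod] at hle
    exact mul_self_eq_zero.mp (le_zero_iff.mp hle)
  have hDnull : ∀ μ : Measure E, (μ.prod π) D = 0 := by
    intro μ
    rw [Measure.prod_apply hDmeas]
    have hpre : ∀ x : E, (Prod.mk x ⁻¹' D) = {x} := by
      intro x; ext y; simp [hD, eq_comm]
    simp [hpre, hatom]
  -- measurability of couplingMGF and its π-integral
  have hg : Measurable (couplingMGF Q D r₀) := measurable_couplingMGF Q D hDmeas r₀
  set f : E → ℝ≥0∞ := fun x => ∫⁻ y, couplingMGF Q D r₀ (x, y) ∂π with hfdef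
  have hfm : Measurable f := hg.lintegral_prod_right'
  have hFeq : ∀ μ : Measure E, couplingMGFFrom Q D r₀ (μ.prod π) = ∫⁻ x, f x ∂μ :=
    fun μ => lintegral_prod _ hg.aemeasurable
  -- one-step inequality
  have hstep : ∀ (μ : Measure E), IsProbabilityMeasure μ →
      (e * β) * couplingMGFFrom Q D r₀ ((μ.bind fun x => P x).prod π)
        ≤ couplingMGFFrom Q D r₀ (μ.prod π) := by
    intro μ hμ
    haveI := hμ
    have hρD : (μ.prod π) D = 0 := hDnull μ
    have hcompl : ∀ u : E × E → ℝ≥0∞,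
        ∫⁻ z, u z ∂(μ.prod π) = ∫⁻ z in Dᶜ, u z ∂(μ.prod π) := by
      intro u
      have h0 : ∫⁻ z in D, u z ∂(μ.prod π) = 0 := by
        rw [Measure.restrict_eq_zero.mpr hρD]; exact lintegral_zero_measure _
      rw [← lintegral_add_compl u hDmeas, h0, zero_add]
    have hh : Measurable fun z : E × E => ∫⁻ w, couplingMGF Q D r₀ w ∂((P z.1).prod (P z.2)) := by
      simp only [hK']
      exact Measurable.lintegral_kernel hg
    calc (e * β) * couplingMGFFrom Q D r₀ ((μ.bind fun x => P x).prod π)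
        = (e * β) * ∫⁻ z, couplingMGF Q D r₀ z
            ∂((μ.prod π).bind (fun p : E × E => (P p.1).prod (P p.2))) := by
          rw [couplingMGFFrom]
          congr 2
          rw [hbind μ π inferInstance inferInstance, hinv]
      _ = (e * β) * ∫⁻ z, (∫⁻ w, couplingMGF Q D r₀ w ∂((P z.1).prod (P z.2))) ∂(μ.prod π) := by
          rw [Measure.lintegral_bind hKmeas.aemeasurable hg.aemeasurable]
      _ = (e * β) * ∫⁻ z in Dᶜ, (∫⁻ w, couplingMGF Q D r₀ w ∂((P z.1).prod (P z.2)))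
            ∂(μ.prod π) := by rw [hcompl]
      _ = ∫⁻ z in Dᶜ, (e * β) * (∫⁻ w, couplingMGF Q D r₀ w ∂((P z.1).prod (P z.2)))
            ∂(μ.prod π) := by rw [lintegral_const_mul _ hh]
      _ ≤ ∫⁻ z in Dᶜ, couplingMGF Q D r₀ z ∂(μ.prod π) := by
          refine setLIntegral_mono hg fun z hz => ?_
          rw [couplingMGF_step Q D hDmeas r₀ hz]
          have hle : β * ∫⁻ w, couplingMGF Q D r₀ w ∂((P z.1).prod (P z.2))
              ≤ ∫⁻ w, couplingMGF Q D r₀ w ∂(Q z) := by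
            rw [← smul_eq_mul, ← lintegral_smul_measure]
            exact lintegral_mono' (hindep z hz) le_rfl
          calc (e * β) * ∫⁻ w, couplingMGF Q D r₀ w ∂((P z.1).prod (P z.2))
              = e * (β * ∫⁻ w, couplingMGF Q D r₀ w ∂((P z.1).prod (P z.2))) := by
                rw [mul_assoc]
            _ ≤ e * ∫⁻ w, couplingMGF Q D r₀ w ∂(Q z) := mul_le_mul_right hle e
      _ = couplingMGFFrom Q D r₀ (μ.prod π) := by rw [couplingMGFFrom, hcompl]
  -- iterates are Markov
  have hmarkov : ∀ n, IsMarkovKernel (iterK P n) := by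
    intro n
    induction n with
    | zero => rw [iterK]; infer_instance
    | succ n ih => rw [iterK]; haveI := ih; infer_instance
  -- finiteness propagates along iterates
  have hiter : ∀ n, couplingMGFFrom Q D r₀ (((iterK P n) x₀).prod π) ≠ ⊤ := by
    intro n
    induction n with
    | zero =>
      have h0 : iterK P 0 x₀ = Measure.dirac x₀ := by rw [iterK, Kernel.id_apply]
      rw [h0]; exact hfin.ne
    | succ n ih =>
      haveI := hmarkov n
      have happ : iterK P (n + 1) x₀ = ((iterK P n) x₀).bind fun x => P x := by
        rw [iterK, Kernel.comp_apply]
      rw [happ]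
      intro htop
      have hle := hstep ((iterK P n) x₀) inferInstance
      rw [htop, ENNReal.mul_top hc] at hle
      exact ih (top_le_iff.mp hle)
  -- the bad set is null for every iterate, hence for π by ergodicity
  have hBmeas : MeasurableSet (f ⁻¹' {⊤}) := hfm (measurableSet_singleton ⊤)
  have hBn : ∀ n, (iterK P n) x₀ (f ⁻¹' {⊤}) = 0 := by
    intro n
    haveI := hmarkov n
    have hne : ∫⁻ x, f x ∂((iterK P n) x₀) ≠ ⊤ := by
      rw [← hFeq]; exact hiter n
    have hae := ae_lt_top hfm hne
    refine measure_mono_null ?_ (ae_iff.mp hae)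
    intro x hx
    simp only [Set.mem_preimage, Set.mem_singleton_iff] at hx
    simp [hx]
  have hπB : π (f ⁻¹' {⊤}) = 0 := by
    have ht := herg x₀ _ hBmeas
    simp only [hBn] at ht
    exact (tendsto_nhds_unique ht tendsto_const_nhds).symm ▸ rfl
  have hae : ∀ᵐ x ∂π, f x ≠ ⊤ := by
    rw [ae_iff]
    convert hπB using 2
    ext x
    simp [f]
  refine hae.mono fun x hx => ?_
  have hx' : couplingMGFFrom Q D r₀ ((Measure.dirac x).prod π) = f x := by
    rw [hFeq, lintegral_dirac' _ hfm]
  rw [hx']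
  exact lt_top_iff_ne_top.mpr hx
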